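/- arXiv:1002.4868 — 2 statements merged into one kernel-verified Lean document; each statement's English description precedes it below -/
import Mathlib

section
/- Let E be a countable measurable color space and γ a partially oriented specification on Ω=E^S. Define, for x<y in S, α_{y,x} := sup{ (1/2)·Σ_{a∈E} |γ_y({σ: σ_y=a},ξ) − γ_y({σ: σ_y=a},η)| : ξ,η∈Ω agree at every site except possibly x }. Then (α_{y,x})_{x<y} is a dust-rate matrix for γ, i.e. δ_x(γ_y f) ≤ δ_y(f)·α_{y,x} for every y∈S, x<y, and bounded ℱ_{{y}}-measurable f. Moreover, if E has exactly two elements, then these are the smallest possible entries: every dust-rate matrix (β_{y,x})_{x<y} for γ satisfies β_{y,x} ≥ α_{y,x}. -/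
open MeasureTheory Filter Topology
open scoped ENNReal

namespace POCpaper

section Geometry

variable {S : Type*} [PartialOrder S]

/-- The past of a set of sites. -/
def past (Υ : Set S) : Set S := {x | x ∉ Υ ∧ ∃ y ∈ Υ, x < y}

/-- The future of a set of sites. -/
def future (Υ : Set S) : Set S := {x | x ∉ Υ ∧ ∃ y ∈ Υ, y < x}

/-- The outer time of a set of sites: sites incomparable with every site of the set. -/
def outerT (Υ : Set S) : Set S := {x | ∀ y ∈ Υ, ¬ x ≤ y ∧ ¬ y ≤ x}

/-- Maximal elements of a set. -/
def sMax (A : Set S) : Set S := {x | x ∈ A ∧ ∀ y ∈ A, ¬ x < y}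

/-- Minimal elements of a set. -/
def sMin (A : Set S) : Set S := {x | x ∈ A ∧ ∀ y ∈ A, ¬ y < x}

/-- The (strict) past of a single site. -/
def pastPt (x : S) : Set S := {y | y < x}

/-- The (strict) future of a single site. -/
def futPt (x : S) : Set S := {y | x < y}

/-- A time box: a finite set whose past and future are disjoint. -/
def IsTimeBox (Λ : Finset S) : Prop := past (Λ : Set S) ∩ future (Λ : Set S) = ∅

/-- `⌊Λ⌋ = S ∖ Λ₊`. -/
def floorB (Λ : Finset S) : Set S := (future (Λ : Set S))ᶜ

/-- `Λ° = Λ₋ ∪ Λ*`. -/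
def ringB (Λ : Finset S) : Set S := past (Λ : Set S) ∪ outerT (Λ : Set S)

/-- The nearest past `∂Λ` of a box. -/
def nearPast (Λ : Finset S) : Set S := (⋃ x ∈ Λ, sMax (pastPt x)) \ (Λ : Set S)

/-- A slice: a (finite) set of pairwise incomparable sites. -/
def IsSliceSet (A : Set S) : Prop := A.Finite ∧ ∀ x ∈ A, ∀ y ∈ A, x ≠ y → ¬ x ≤ y

end Geometry

/-- The standing assumptions on the site space `S`. -/
structure Standing (S : Type*) [PartialOrder S] : Prop where
  finMax : ∀ x : S, (sMax (pastPt x)).Finite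
  finMin : ∀ x : S, (sMin (futPt x)).Finite
  reachMax : ∀ x y : S, y < x → ∃ y₀ ∈ sMax (pastPt x), y ≤ y₀ ∧ y₀ < x
  reachMin : ∀ x z : S, x < z → ∃ z₀ ∈ sMin (futPt x), z₀ ≤ z ∧ x < z₀
  noMinimal : ∀ x : S, ∃ y : S, y < x

/-- A function is bounded. -/
def Bounded {α : Type*} (f : α → ℝ) : Prop := ∃ C : ℝ, ∀ a, |f a| ≤ C

section Kernels

variable {S : Type*} [PartialOrder S] (E : Type*) [MeasurableSpace E]

/-- `ℱ_Υ`: the sub-σ-algebra of the product σ-algebra generated by the coordinates in `Υ`. -/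
def F (Υ : Set S) : MeasurableSpace (S → E) :=
  MeasurableSpace.comap (fun ω (y : Υ) => ω y) MeasurableSpace.pi

/-- A measure on `Ω` with the σ-algebra `ℱ_{⌊Λ⌋}`. -/
abbrev BoxMeasure (Λ : Finset S) := @Measure (S → E) (F E (floorB Λ))

/-- A proper oriented kernel on a time box `Λ`. -/
structure IsProperKernel (Λ : Finset S) (κ : (S → E) → BoxMeasure E Λ) : Prop where
  prob : ∀ ω, IsProbabilityMeasure (κ ω)
  measOuter : ∀ A : Set (S → E), MeasurableSet[F E (floorB Λ)] A →
    Measurable[F E (ringB Λ)] fun ω => κ ω A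
  measPast : ∀ A : Set (S → E), MeasurableSet[F E ((Λ : Set S))] A →
    Measurable[F E (past (Λ : Set S))] fun ω => κ ω A
  proper : ∀ B : Set (S → E), MeasurableSet[F E (ringB Λ)] B →
    ∀ ω, κ ω B = B.indicator (fun _ => (1 : ℝ≥0∞)) ω

/-- A partially oriented specification (POS). -/
structure IsPOS (γ : ∀ Λ : Finset S, (S → E) → BoxMeasure E Λ) : Prop where
  proper : ∀ Λ : Finset S, IsTimeBox Λ → IsProperKernel E Λ (γ Λ)
  consist : ∀ Λ Δ : Finset S, IsTimeBox Λ → IsTimeBox Δ → Λ ⊆ Δ →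
    ∀ h : (S → E) → ℝ, Measurable[F E (floorB Λ)] h → Bounded h →
      ∀ ω : S → E, ∫ σ, (∫ ξ, h ξ ∂(γ Λ σ)) ∂(γ Δ ω) = ∫ σ, h σ ∂(γ Δ ω)

/-- A measure consistent with a POS: a partially oriented chain (γ-POC). -/
def IsPOC (γ : ∀ Λ : Finset S, (S → E) → BoxMeasure E Λ) (μ : Measure (S → E)) : Prop :=
  IsProbabilityMeasure μ ∧
  ∀ Λ : Finset S, IsTimeBox Λ →
    ∀ h : (S → E) → ℝ, Measurable[F E (floorB Λ)] h → Bounded h →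
      ∫ σ, (∫ ξ, h ξ ∂(γ Λ σ)) ∂μ = ∫ σ, h σ ∂μ

/-- The tail σ-algebra `ℱ₋∞ = ⋂_{Λ time box} ℱ_{Λ°}`. -/
def tailField : MeasurableSpace (S → E) :=
  ⨅ (Λ : Finset S) (_ : IsTimeBox Λ), F E (ringB Λ)

/-- Extreme points of the convex set `𝒢(γ)`. -/
def IsExtremePOC (γ : ∀ Λ : Finset S, (S → E) → BoxMeasure E Λ) (μ : Measure (S → E)) : Prop :=
  IsPOC E γ μ ∧
  ∀ (t : ℝ≥0∞) (ν₁ ν₂ : Measure (S → E)), 0 < t → t < 1 →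
    IsPOC E γ ν₁ → IsPOC E γ ν₂ → μ = t • ν₁ + (1 - t) • ν₂ → ν₁ = ν₂

/-- A local function: measurable with respect to finitely many coordinates. -/
def IsLocal (f : (S → E) → ℝ) : Prop := ∃ Υ : Finset S, Measurable[F E ((Υ : Set S))] f

/-- A quasilocal function: uniform limit of bounded local functions. -/
def IsQuasilocal (f : (S → E) → ℝ) : Prop :=
  ∀ ε : ℝ, 0 < ε → ∃ g : (S → E) → ℝ, IsLocal E g ∧ Bounded g ∧ ∀ ω, |f ω - g ω| ≤ ε

/-- A local event. -/
def IsLocalEvent (A : Set (S → E)) : Prop := ∃ Υ : Finset S, MeasurableSet[F E ((Υ : Set S))] A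

/-- A quasilocal POS. -/
def IsQuasilocalPOS (γ : ∀ Λ : Finset S, (S → E) → BoxMeasure E Λ) : Prop :=
  IsPOS E γ ∧ ∀ Λ : Finset S, IsTimeBox Λ → ∀ A : Set (S → E), IsLocalEvent E A →
    MeasurableSet[F E (floorB Λ)] A → IsQuasilocal E fun ω => (γ Λ ω A).toReal

/-- A POMM: a Markovian POS, whose kernels depend on the past only through the nearest past. -/
def IsPOMM (γ : ∀ Λ : Finset S, (S → E) → BoxMeasure E Λ) : Prop :=
  IsPOS E γ ∧ ∀ Λ : Finset S, IsTimeBox Λ → ∀ A : Set (S → E),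
    MeasurableSet[F E ((Λ : Set S))] A → Measurable[F E (nearPast Λ)] fun ω => γ Λ ω A

/-- Two configurations agreeing at every site except possibly `x`. -/
def agreeExcept (x : S) (ξ η : S → E) : Prop := ∀ z : S, z ≠ x → ξ z = η z

/-- The oscillation `δ_x(f)` of `f` at the site `x`. -/
noncomputable def osc (x : S) (f : (S → E) → ℝ) : ℝ :=
  sSup {d : ℝ | ∃ ξ η : S → E, agreeExcept E x ξ η ∧ d = |f ξ - f η|}

/-- A dust-rate matrix for the POS `γ`. -/
def IsDustRate (γ : ∀ Λ : Finset S, (S → E) → BoxMeasure E Λ) (α : S → S → ℝ) : Prop :=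
  (∀ ⦃x y : S⦄, x < y → 0 ≤ α y x) ∧
  ∀ y x : S, x < y → ∀ f : (S → E) → ℝ,
    Measurable[F E ({y} : Set S)] f → Bounded f →
      osc E x (fun ω => ∫ ξ, f ξ ∂(γ {y} ω)) ≤ osc E y f * α y x

/-- The Dobrushin dust-rate matrix built from variational distances of single-site kernels. -/
noncomputable def dobMatrix (γ : ∀ Λ : Finset S, (S → E) → BoxMeasure E Λ) (y x : S) : ℝ :=
  sSup {d : ℝ | ∃ ξ η : S → E, agreeExcept E x ξ η ∧
    d = (1 / 2) * ∑' a : E,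
      |((γ {y} ξ) {σ | σ y = a}).toReal - ((γ {y} η) {σ | σ y = a}).toReal|}

/-- The maximal percolation parameters `p_x^γ` of a POMM. -/
noncomputable def percParam (γ : ∀ Λ : Finset S, (S → E) → BoxMeasure E Λ) (x : S) : ℝ :=
  sSup {d : ℝ | ∃ ξ η : S → E,
    d = (1 / 2) * ∑' a : E,
      |((γ {x} ξ) {σ | σ x = a}).toReal - ((γ {x} η) {σ | σ x = a}).toReal|}

end Kernels

section Percolation

variable {S : Type*} [PartialOrder S]

/-- An oriented (towards the past) open path from `x` to `y`. -/
def OpenPath (X : S → Bool) (x y : S) : Prop :=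
  ∃ L : List S, L ≠ [] ∧ L.head? = some x ∧ L.getLast? = some y ∧
    L.Chain' (fun a b => b ∈ sMax (pastPt a)) ∧ ∀ z ∈ L, X z = true

/-- `x` lies in an infinite oriented open cluster: the event `(x → -∞)`. -/
def ToMinusInfinity (X : S → Bool) (x : S) : Prop :=
  ∃ c : ℕ → S, StrictAnti c ∧ ∀ n, OpenPath X x (c n)

/-- `ψ` is the product Bernoulli measure with parameters `p`. -/
def IsBernoulliProduct (p : S → ℝ) (ψ : Measure (S → Bool)) : Prop :=
  IsProbabilityMeasure ψ ∧ ∀ (T : Finset S) (b : S → Bool),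
    ψ {X | ∀ x ∈ T, X x = b x} = ∏ x ∈ T, ENNReal.ofReal (if b x then p x else 1 - p x)

end Percolation


section AuxProofs

open MeasureTheory

variable {S : Type*} [PartialOrder S] {E : Type*} [MeasurableSpace E]

lemma F_mono_aux {Υ Υ' : Set S} (h : Υ ⊆ Υ') : F E Υ ≤ F E Υ' := by
  have hcomp : (fun (ω : S → E) (z : Υ) => ω z) =
      (fun (v : Υ' → E) (z : Υ) => v ⟨z.1, h z.2⟩) ∘ (fun (ω : S → E) (z : Υ') => ω z) := rfl
  have hr : Measurable (fun (v : Υ' → E) (z : Υ) => v ⟨z.1, h z.2⟩) :=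
    measurable_pi_lambda _ fun z => measurable_pi_apply _
  calc F E Υ = (MeasurableSpace.pi.comap (fun (v : Υ' → E) (z : Υ) => v ⟨z.1, h z.2⟩)).comap
        (fun (ω : S → E) (z : Υ') => ω z) := by
        rw [F, hcomp, ← MeasurableSpace.comap_comp]
    _ ≤ F E Υ' := MeasurableSpace.comap_mono (measurable_iff_comap_le.1 hr)

lemma eval_meas_singleton (y : S) :
    Measurable[F E ({y} : Set S)] (fun ω : S → E => ω y) := by
  have hcomp : (fun ω : S → E => ω y) =
      (fun v : ({y} : Set S) → E => v ⟨y, rfl⟩) ∘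
        (fun (ω : S → E) (z : ({y} : Set S)) => ω z) := rfl
  rw [hcomp]
  exact (measurable_pi_apply _).comp (measurable_iff_comap_le.2 le_rfl)

lemma singleton_subset_floorB (y : S) :
    ({y} : Set S) ⊆ floorB ({y} : Finset S) := by
  intro z hz
  rcases hz with rfl
  intro hz
  exact hz.1 (by simp)

lemma eval_meas_floorB (y : S) :
    Measurable[F E (floorB ({y} : Finset S))] (fun ω : S → E => ω y) :=
  (eval_meas_singleton y).mono (F_mono_aux (singleton_subset_floorB y)) le_rfl

lemma singleton_timeBox (y : S) : IsTimeBox ({y} : Finset S) := by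
  rw [IsTimeBox, Set.eq_empty_iff_forall_notMem]
  rintro z ⟨⟨-, w, hw, hzw⟩, -, v, hv, hvz⟩
  simp only [Finset.coe_singleton, Set.mem_singleton_iff] at hw hv
  subst hw; subst hv
  exact absurd (hzw.trans hvz) (lt_irrefl z)

variable [Countable E] [MeasurableSingletonClass E]

lemma prob_tsum_aux {Ω : Type*} (mΩ : MeasurableSpace Ω) (μ : @Measure Ω mΩ)
    (hμ : IsProbabilityMeasure μ) (π : Ω → E) (hπ : @Measurable Ω E mΩ _ π) :
    Summable (fun a : E => (μ (π ⁻¹' {a})).toReal) ∧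
      (∀ a : E, 0 ≤ (μ (π ⁻¹' {a})).toReal) ∧
      ∑' a : E, (μ (π ⁻¹' {a})).toReal = 1 := by
  letI := mΩ
  haveI := hμ
  have hU : (⋃ a : E, π ⁻¹' {a}) = Set.univ := by
    ext ω; simp [Set.mem_iUnion]
  have hsum : ∑' a : E, μ (π ⁻¹' {a}) = 1 := by
    rw [← measure_iUnion ?_ (fun a => hπ (measurableSet_singleton a))]
    · rw [hU, measure_univ]
    · intro a b hab
      exact Disjoint.preimage π (by simpa using hab)
  refine ⟨ENNReal.summable_toReal (by rw [hsum]; exact ENNReal.one_ne_top),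
    fun a => ENNReal.toReal_nonneg, ?_⟩
  rw [← ENNReal.tsum_toReal_eq (fun a => measure_ne_top μ _), hsum, ENNReal.toReal_one]

lemma int_eq_aux {Ω : Type*} (mΩ : MeasurableSpace Ω) (μ : @Measure Ω mΩ)
    (hμ : IsProbabilityMeasure μ) (π : Ω → E) (hπ : @Measurable Ω E mΩ _ π)
    (g : E → ℝ) (C : ℝ) (hg : ∀ a, |g a| ≤ C) :
    ∫ ω, g (π ω) ∂μ = ∑' a : E, g a * (μ (π ⁻¹' {a})).toReal := by
  letI := mΩ
  haveI := hμ
  haveI : IsProbabilityMeasure (μ.map π) := Measure.isProbabilityMeasure_map hπ.aemeasurable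
  have hint : Integrable g (μ.map π) := by
    refine (integrable_const C).mono' (measurable_of_countable g).aestronglyMeasurable ?_
    exact Filter.Eventually.of_forall fun a => (by simpa using hg a)
  rw [← integral_map hπ.aemeasurable (measurable_of_countable g).aestronglyMeasurable,
    integral_countable' hint]
  refine tsum_congr fun a => ?_
  rw [measureReal_def, Measure.map_apply hπ (measurableSet_singleton a), smul_eq_mul, mul_comm]

lemma seq_bound_aux [Nonempty E] (g p q : E → ℝ) (K : ℝ) (hK : ∀ a b, |g a - g b| ≤ K)
    (hp : Summable p) (hq : Summable q) (hp0 : ∀ a, 0 ≤ p a) (hq0 : ∀ a, 0 ≤ q a)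
    (hp1 : ∑' a, p a = 1) (hq1 : ∑' a, q a = 1) :
    |(∑' a, g a * p a) - ∑' a, g a * q a| ≤ K * ((1 / 2) * ∑' a, |p a - q a|) := by
  obtain ⟨a₀⟩ := ‹Nonempty E›
  have hK0 : 0 ≤ K := le_trans (abs_nonneg _) (hK a₀ a₀)
  have hbdd : BddAbove (Set.range g) := ⟨g a₀ + K, by
    rintro _ ⟨a, rfl⟩
    have := abs_le.1 (hK a a₀)
    linarith [this.2]⟩
  have hbdd' : BddBelow (Set.range g) := ⟨g a₀ - K, by
    rintro _ ⟨a, rfl⟩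
    have := abs_le.1 (hK a a₀)
    linarith [this.1]⟩
  set M := sSup (Set.range g) with hM
  set m := sInf (Set.range g) with hm
  have hMm : M - m ≤ K := by
    have h1 : ∀ a, g a ≤ m + K := by
      intro a
      have : g a - K ≤ m := le_csInf (Set.range_nonempty g) (by
        rintro _ ⟨b, rfl⟩
        have := abs_le.1 (hK a b)
        linarith [this.2])
      linarith
    have h2 : M ≤ m + K := csSup_le (Set.range_nonempty g) (by rintro _ ⟨a, rfl⟩; exact h1 a)
    linarith
  set c := (M + m) / 2 with hc
  have hgc : ∀ a, |g a - c| ≤ K / 2 := by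
    intro a
    have h1 : g a ≤ M := le_csSup hbdd ⟨a, rfl⟩
    have h2 : m ≤ g a := csInf_le hbdd' ⟨a, rfl⟩
    rw [abs_le]; constructor <;> simp only [hc] <;> linarith
  have hCg : ∀ a, |g a| ≤ |c| + K / 2 := by
    intro a
    calc |g a| = |(g a - c) + c| := by ring_nf
    _ ≤ |g a - c| + |c| := abs_add_le _ _
    _ ≤ |c| + K / 2 := by linarith [hgc a]
  have hgp : Summable (fun a => g a * p a) := by
    refine Summable.of_abs (Summable.of_nonneg_of_le (fun a => abs_nonneg _) (fun a => ?_)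
      (hp.mul_left (|c| + K / 2)))
    rw [abs_mul, abs_of_nonneg (hp0 a)]
    exact mul_le_mul_of_nonneg_right (hCg a) (hp0 a)
  have hgq : Summable (fun a => g a * q a) := by
    refine Summable.of_abs (Summable.of_nonneg_of_le (fun a => abs_nonneg _) (fun a => ?_)
      (hq.mul_left (|c| + K / 2)))
    rw [abs_mul, abs_of_nonneg (hq0 a)]
    exact mul_le_mul_of_nonneg_right (hCg a) (hq0 a)
  have hpq : Summable (fun a => |p a - q a|) := (hp.sub hq).abs
  have hkey : (∑' a, g a * p a) - ∑' a, g a * q a = ∑' a, (g a - c) * (p a - q a) := by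
    have heq : ∀ a, (g a - c) * (p a - q a)
        = (g a * p a - g a * q a) - (c * p a - c * q a) := fun a => by ring
    rw [tsum_congr heq, Summable.tsum_sub ((hgp.sub hgq)) ((hp.mul_left c).sub (hq.mul_left c)),
      Summable.tsum_sub hgp hgq, Summable.tsum_sub (hp.mul_left c) (hq.mul_left c),
      tsum_mul_left, tsum_mul_left, hp1, hq1]
    ring
  rw [hkey]
  have hsummand : Summable (fun a => |(g a - c) * (p a - q a)|) := by
    refine Summable.of_nonneg_of_le (fun a => abs_nonneg _) (fun a => ?_) (hpq.mul_left (K / 2))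
    rw [abs_mul]
    exact mul_le_mul_of_nonneg_right (hgc a) (abs_nonneg _)
  have habs : |∑' a, (g a - c) * (p a - q a)| ≤ ∑' a, |(g a - c) * (p a - q a)| := by
    have h := norm_tsum_le_tsum_norm (f := fun a => (g a - c) * (p a - q a))
      (by simpa only [Real.norm_eq_abs] using hsummand)
    simpa only [Real.norm_eq_abs] using h
  calc |∑' a, (g a - c) * (p a - q a)| ≤ ∑' a, |(g a - c) * (p a - q a)| := habs
    _ ≤ ∑' a, (K / 2) * |p a - q a| := Summable.tsum_le_tsum (fun a => by
        rw [abs_mul]; exact mul_le_mul_of_nonneg_right (hgc a) (abs_nonneg _))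
        hsummand (hpq.mul_left _)
    _ = (K / 2) * ∑' a, |p a - q a| := tsum_mul_left
    _ = K * ((1 / 2) * ∑' a, |p a - q a|) := by ring

lemma half_tsum_le_one (p q : E → ℝ) (hp : Summable p) (hq : Summable q)
    (hp0 : ∀ a, 0 ≤ p a) (hq0 : ∀ a, 0 ≤ q a)
    (hp1 : ∑' a, p a = 1) (hq1 : ∑' a, q a = 1) :
    (1 / 2 : ℝ) * ∑' a, |p a - q a| ≤ 1 := by
  have h1 : ∑' a, |p a - q a| ≤ ∑' a, (p a + q a) := by
    refine Summable.tsum_le_tsum (fun a => ?_) (hp.sub hq).abs (hp.add hq)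
    rw [abs_sub_le_iff]
    constructor <;> [linarith [hq0 a]; linarith [hp0 a]]
  rw [Summable.tsum_add hp hq, hp1, hq1] at h1
  linarith

lemma osc_bddAbove_aux (x : S) (f : (S → E) → ℝ) (C : ℝ) (hC : ∀ ω, |f ω| ≤ C) :
    BddAbove {d : ℝ | ∃ ξ η : S → E, agreeExcept E x ξ η ∧ d = |f ξ - f η|} := by
  refine ⟨2 * C, ?_⟩
  rintro d ⟨ξ, η, -, rfl⟩
  have h1 := hC ξ
  have h2 := hC η
  have h3 : |f ξ - f η| ≤ |f ξ| + |f η| := by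
    have := abs_sub_le (f ξ) 0 (f η); simpa using this
  linarith

/-- Any `F {y}`-measurable function factors through the coordinate at `y`. -/
lemma factor_through_eval {y : S} {f : (S → E) → ℝ}
    (hf : Measurable[F E ({y} : Set S)] f) (ω : S → E) :
    f ω = f (fun _ => ω y) := by
  have h := hf (measurableSet_singleton (f (fun _ => ω y)))
  rw [F, MeasurableSpace.measurableSet_comap] at h
  obtain ⟨t, ht, hpre⟩ := h
  have hπ : (fun z : ({y} : Set S) => ω z.1) = (fun z : ({y} : Set S) => (fun _ : S => ω y) z.1) := by
    funext z
    rcases z with ⟨z, hz⟩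
    rcases hz with rfl
    rfl
  have hmem : (fun z : ({y} : Set S) => (fun _ : S => ω y) z.1) ∈ t := by
    have : ((fun _ : S => ω y) : S → E) ∈ (fun (ω : S → E) (z : ({y} : Set S)) => ω z) ⁻¹' t := by
      rw [hpre]; exact rfl
    exact this
  have : ω ∈ (fun (ω : S → E) (z : ({y} : Set S)) => ω z) ⁻¹' t := by
    show (fun z : ({y} : Set S) => ω z.1) ∈ t
    rw [hπ]; exact hmem
  rw [hpre] at this
  exact this

end AuxProofs

/-- The variational-distance matrix is a dust-rate matrix, and for a two-color space it has
the smallest possible entries among all dust-rate matrices. -/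
theorem dobMatrix_is_dust_rate {S : Type*} [PartialOrder S] [Countable S]
    {E : Type*} [MeasurableSpace E] [Countable E] [MeasurableSingletonClass E]
    (hS : Standing S)
    (γ : ∀ Λ : Finset S, (S → E) → BoxMeasure E Λ) (hγ : IsPOS E γ) :
    IsDustRate E γ (dobMatrix E γ) ∧
    ((∃ a b : E, a ≠ b ∧ ∀ c : E, c = a ∨ c = b) →
      ∀ β : S → S → ℝ, IsDustRate E γ β →
        ∀ y x : S, x < y → dobMatrix E γ y x ≤ β y x) := by
  classical
  constructor
  · constructor
    · intro x y _
      apply Real.sSup_nonneg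
      rintro d ⟨ξ, η, -, rfl⟩
      have : (0:ℝ) ≤ ∑' a : E, |((γ {y} ξ) {σ | σ y = a}).toReal - ((γ {y} η) {σ | σ y = a}).toReal| :=
        tsum_nonneg fun a => abs_nonneg _
      linarith
    · intro y x hxy f hf hb
      obtain ⟨C, hC⟩ := hb
      have hprob : ∀ ω, IsProbabilityMeasure (γ {y} ω) :=
        (hγ.proper {y} (singleton_timeBox y)).prob
      have hπ : Measurable[F E (floorB ({y} : Finset S))] (fun ω : S → E => ω y) :=
        eval_meas_floorB y
      have hoscy0 : 0 ≤ osc E y f := Real.sSup_nonneg (by rintro d ⟨ξ, η, -, rfl⟩; exact abs_nonneg _)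
      have hdob0 : 0 ≤ dobMatrix E γ y x := Real.sSup_nonneg (by
        rintro d ⟨ξ, η, -, rfl⟩
        have : (0:ℝ) ≤ ∑' a : E, |((γ {y} ξ) {σ | σ y = a}).toReal - ((γ {y} η) {σ | σ y = a}).toReal| :=
          tsum_nonneg fun a => abs_nonneg _
        linarith)
      apply Real.sSup_le ?_ (mul_nonneg hoscy0 hdob0)
      rintro d ⟨ξ, η, hagree, rfl⟩
      haveI : Nonempty E := ⟨ξ y⟩
      set g : E → ℝ := fun a => f (fun _ => a) with hgdef
      have hfg : ∀ ω : S → E, f ω = g (ω y) := fun ω => factor_through_eval hf ω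
      have hgC : ∀ a, |g a| ≤ C := fun a => hC _
      have hK : ∀ a b : E, |g a - g b| ≤ osc E y f := by
        intro a b
        refine le_csSup (osc_bddAbove_aux y f C hC)
          ⟨Function.update ξ y a, Function.update ξ y b, fun z hz => by
            rw [Function.update_of_ne hz, Function.update_of_ne hz], ?_⟩
        rw [hfg (Function.update ξ y a), hfg (Function.update ξ y b),
          Function.update_self, Function.update_self]
      obtain ⟨hpS, hp0, hp1⟩ := prob_tsum_aux (F E (floorB ({y} : Finset S))) (γ {y} ξ)
        (hprob ξ) (fun ω : S → E => ω y) hπ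
      obtain ⟨hqS, hq0, hq1⟩ := prob_tsum_aux (F E (floorB ({y} : Finset S))) (γ {y} η)
        (hprob η) (fun ω : S → E => ω y) hπ
      have hint1 : ∫ σ, f σ ∂(γ {y} ξ) =
          ∑' a : E, g a * ((γ {y} ξ) ((fun ω : S → E => ω y) ⁻¹' {a})).toReal := by
        rw [show f = fun σ => g (σ y) from funext hfg]
        exact int_eq_aux _ _ (hprob ξ) _ hπ g C hgC
      have hint2 : ∫ σ, f σ ∂(γ {y} η) =
          ∑' a : E, g a * ((γ {y} η) ((fun ω : S → E => ω y) ⁻¹' {a})).toReal := by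
        rw [show f = fun σ => g (σ y) from funext hfg]
        exact int_eq_aux _ _ (hprob η) _ hπ g C hgC
      have hpre : ∀ a : E, ((fun ω : S → E => ω y) ⁻¹' {a}) = {σ : S → E | σ y = a} :=
        fun a => rfl
      show |(∫ σ, f σ ∂(γ {y} ξ)) - ∫ σ, f σ ∂(γ {y} η)| ≤ osc E y f * dobMatrix E γ y x
      rw [hint1, hint2]
      have hmain := seq_bound_aux g
        (fun a : E => ((γ {y} ξ) ((fun ω : S → E => ω y) ⁻¹' {a})).toReal)
        (fun a : E => ((γ {y} η) ((fun ω : S → E => ω y) ⁻¹' {a})).toReal)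
        (osc E y f) hK hpS hqS hp0 hq0 hp1 hq1
      refine hmain.trans (mul_le_mul_of_nonneg_left ?_ hoscy0)
      -- (1/2) tsum ≤ dobMatrix
      have hDbdd : BddAbove {d : ℝ | ∃ ξ η : S → E, agreeExcept E x ξ η ∧
          d = (1 / 2) * ∑' a : E,
            |((γ {y} ξ) {σ | σ y = a}).toReal - ((γ {y} η) {σ | σ y = a}).toReal|} := by
        refine ⟨1, ?_⟩
        rintro d ⟨ξ', η', -, rfl⟩
        obtain ⟨hpS', hp0', hp1'⟩ := prob_tsum_aux (F E (floorB ({y} : Finset S))) (γ {y} ξ')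
          (hprob ξ') (fun ω : S → E => ω y) hπ
        obtain ⟨hqS', hq0', hq1'⟩ := prob_tsum_aux (F E (floorB ({y} : Finset S))) (γ {y} η')
          (hprob η') (fun ω : S → E => ω y) hπ
        simp only [hpre] at hpS' hp0' hp1' hqS' hq0' hq1'
        exact half_tsum_le_one _ _ hpS' hqS' hp0' hq0' hp1' hq1'
      refine le_csSup hDbdd ⟨ξ, η, hagree, ?_⟩
      simp only [hpre]
  · rintro ⟨a, b, hab, hall⟩ β hβ y x hxy
    haveI : Nonempty E := ⟨a⟩
    have hprob : ∀ ω, IsProbabilityMeasure (γ {y} ω) :=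
      (hγ.proper {y} (singleton_timeBox y)).prob
    have hπ : Measurable[F E (floorB ({y} : Finset S))] (fun ω : S → E => ω y) :=
      eval_meas_floorB y
    have hpre : ∀ c : E, ((fun ω : S → E => ω y) ⁻¹' {c}) = {σ : S → E | σ y = c} :=
      fun c => rfl
    set g₀ : E → ℝ := fun e => if e = a then 1 else 0 with hg₀
    set f : (S → E) → ℝ := fun ω => g₀ (ω y) with hfdef
    have hg₀C : ∀ e, |g₀ e| ≤ 1 := by
      intro e; by_cases h : e = a <;> simp [hg₀, h]
    have hfmeas : Measurable[F E ({y} : Set S)] f :=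
      (measurable_of_countable g₀).comp (eval_meas_singleton y)
    have hfb : Bounded f := ⟨1, fun ω => hg₀C _⟩
    have hdust := hβ.2 y x hxy f hfmeas hfb
    have hoscy : osc E y f ≤ 1 := by
      apply Real.sSup_le ?_ zero_le_one
      rintro d ⟨ξ', η', -, rfl⟩
      have h1 := hg₀C (ξ' y)
      have h2 := hg₀C (η' y)
      have hv : ∀ e : E, g₀ e = 1 ∨ g₀ e = 0 := by
        intro e; by_cases h : e = a <;> simp [hg₀, h]
      rcases hv (ξ' y) with h3 | h3 <;> rcases hv (η' y) with h4 | h4 <;>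
        simp only [hfdef, h3, h4] <;> norm_num
    have hgf : ∀ ω : S → E, ∫ σ, f σ ∂(γ {y} ω) = ((γ {y} ω) {σ : S → E | σ y = a}).toReal := by
      intro ω
      have h := int_eq_aux (F E (floorB ({y} : Finset S))) (γ {y} ω) (hprob ω)
        (fun σ : S → E => σ y) hπ g₀ 1 hg₀C
      rw [show (∫ σ, f σ ∂(γ {y} ω)) = ∫ σ, g₀ (σ y) ∂(γ {y} ω) from rfl, h]
      rw [tsum_eq_sum (s := {a, b}) (f := fun c : E =>
        g₀ c * ((γ {y} ω) ((fun σ : S → E => σ y) ⁻¹' {c})).toReal)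
        (fun c hc => absurd (by rcases hall c with rfl | rfl <;> simp) hc)]
      rw [Finset.sum_pair hab]
      have hba : b ≠ a := fun h => hab h.symm
      simp [hg₀, hba, hpre]
    -- show each element of the dob set is ≤ β y x
    apply Real.sSup_le ?_ (hβ.1 hxy)
    rintro d ⟨ξ, η, hagree, rfl⟩
    obtain ⟨hpS, hp0, hp1⟩ := prob_tsum_aux (F E (floorB ({y} : Finset S))) (γ {y} ξ)
      (hprob ξ) (fun ω : S → E => ω y) hπ
    obtain ⟨hqS, hq0, hq1⟩ := prob_tsum_aux (F E (floorB ({y} : Finset S))) (γ {y} η)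
      (hprob η) (fun ω : S → E => ω y) hπ
    set p : E → ℝ := fun c => ((γ {y} ξ) {σ : S → E | σ y = c}).toReal with hp
    set q : E → ℝ := fun c => ((γ {y} η) {σ : S → E | σ y = c}).toReal with hq
    simp only [hpre] at hp1 hq1
    have hsum2 : ∀ r : E → ℝ, ∑' c : E, r c = r a + r b := by
      intro r
      rw [tsum_eq_sum (s := {a, b})
        (fun c hc => absurd (by rcases hall c with rfl | rfl <;> simp) hc), Finset.sum_pair hab]
    have hpa : p a + p b = 1 := by rw [← hsum2 p]; exact hp1
    have hqa : q a + q b = 1 := by rw [← hsum2 q]; exact hq1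
    have hd : (1 / 2 : ℝ) * ∑' c : E, |p c - q c| = |p a - q a| := by
      rw [hsum2 (fun c => |p c - q c|)]
      have : p b - q b = -(p a - q a) := by linarith
      rw [this, abs_neg]
      ring
    have hd2 : (1 / 2 : ℝ) * ∑' c : E,
        |((γ {y} ξ) {σ : S → E | σ y = c}).toReal - ((γ {y} η) {σ : S → E | σ y = c}).toReal|
        = |p a - q a| := hd
    rw [hd2]
    have hoscx : |p a - q a| ≤ osc E x (fun ω => ∫ σ, f σ ∂(γ {y} ω)) := by
      have hbound : ∀ ω : S → E, |∫ σ, f σ ∂(γ {y} ω)| ≤ 1 := by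
        intro ω
        rw [hgf ω]
        rw [abs_of_nonneg ENNReal.toReal_nonneg]
        have h1 : (γ {y} ω) {σ : S → E | σ y = a} ≤ 1 := prob_le_one
        calc ((γ {y} ω) {σ : S → E | σ y = a}).toReal ≤ (1 : ℝ≥0∞).toReal :=
            ENNReal.toReal_mono ENNReal.one_ne_top h1
          _ = 1 := ENNReal.toReal_one
      refine le_csSup (osc_bddAbove_aux x _ 1 hbound) ⟨ξ, η, hagree, ?_⟩
      show |p a - q a| = |(∫ σ, f σ ∂(γ {y} ξ)) - ∫ σ, f σ ∂(γ {y} η)|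
      rw [hgf ξ, hgf η]
    calc |p a - q a| ≤ osc E x (fun ω => ∫ σ, f σ ∂(γ {y} ω)) := hoscx
      _ ≤ osc E y f * β y x := hdust
      _ ≤ 1 * β y x := mul_le_mul_of_nonneg_right hoscy (hβ.1 hxy)
      _ = β y x := one_mul _

end POCpaper
end

section
/- Let Λ and Δ be time boxes in S with Δ∩Λ=∅, Δ∩Λ₊=∅ and Λ₋∩Δ₊=∅, and let γ_Λ, γ_Δ be proper oriented kernels on Λ and Δ. Set Γ:=Λ∪Δ. Then: (i) Γ is a time box, Γ₊=Λ₊∪(Δ₊∖Λ), and Γ₋=Δ₋∪(Λ₋∖Δ); (ii) the composition γ_Γ := γ_Δγ_Λ, defined by γ_Γ(A,ω)=∫γ_Λ(A,σ)γ_Δ(dσ,ω) for A∈ℱ_{⌊Γ⌋}, is well defined and is a proper oriented kernel on Γ. -/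
open MeasureTheory Filter Topology
open scoped ENNReal

namespace POCpaper

section CompositionAux

variable {S : Type*} [PartialOrder S] {E : Type*} [MeasurableSpace E]

lemma measSet_mono {Ω : Type*} {m m' : MeasurableSpace Ω} (h : m ≤ m') {s : Set Ω}
    (hs : MeasurableSet[m] s) : MeasurableSet[m'] s := h _ hs

lemma F_eq_biSup (Υ : Set S) :
    F E Υ = ⨆ x ∈ Υ, MeasurableSpace.comap (fun ω : S → E => ω x) ‹MeasurableSpace E› := by
  rw [F, MeasurableSpace.pi, MeasurableSpace.comap_iSup, iSup_subtype]
  exact iSup_congr fun x => iSup_congr fun hx => by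
    rw [MeasurableSpace.comap_comp]; rfl

lemma F_mono {U V : Set S} (h : U ⊆ V) : (F E U : MeasurableSpace (S → E)) ≤ F E V := by
  rw [F_eq_biSup, F_eq_biSup]
  exact biSup_mono h

lemma F_union (U V : Set S) : (F E (U ∪ V) : MeasurableSpace (S → E)) = F E U ⊔ F E V := by
  rw [F_eq_biSup (E := E), F_eq_biSup (E := E), F_eq_biSup (E := E), iSup_union]

lemma sup_eq_generateFrom_inter {Ω : Type*} (m₁ m₂ : MeasurableSpace Ω) :
    m₁ ⊔ m₂ = MeasurableSpace.generateFrom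
      {A | ∃ s t, MeasurableSet[m₁] s ∧ MeasurableSet[m₂] t ∧ A = s ∩ t} := by
  apply le_antisymm
  · refine sup_le (fun s hs => ?_) (fun t ht => ?_)
    · exact MeasurableSpace.measurableSet_generateFrom
        ⟨s, Set.univ, hs, MeasurableSet.univ, (Set.inter_univ s).symm⟩
    · exact MeasurableSpace.measurableSet_generateFrom
        ⟨Set.univ, t, MeasurableSet.univ, ht, (Set.univ_inter t).symm⟩
  · refine MeasurableSpace.generateFrom_le ?_
    rintro A ⟨s, t, hs, ht, rfl⟩
    exact (measSet_mono le_sup_left hs).inter (measSet_mono le_sup_right ht)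

lemma mem_past_or_outer {Θ : Set S} {x : S} (h₁ : x ∉ Θ) (h₂ : x ∉ future Θ) :
    x ∈ past Θ ∪ outerT Θ := by
  by_cases h : ∃ y ∈ Θ, x < y
  · exact Or.inl ⟨h₁, h⟩
  · refine Or.inr fun y hy => ⟨fun hle => ?_, fun hle => ?_⟩
    · rcases hle.lt_or_eq with hlt | rfl
      · exact h ⟨y, hy, hlt⟩
      · exact h₁ hy
    · rcases hle.lt_or_eq with hlt | heq
      · exact h₂ ⟨h₁, y, hy, hlt⟩
      · exact h₁ (heq ▸ hy)

lemma ringB_subset_floorB {Θ : Finset S} (hΘ : IsTimeBox Θ) : ringB Θ ⊆ floorB Θ := by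
  rintro x (hx | hx)
  · exact fun hf => Set.eq_empty_iff_forall_notMem.mp hΘ x ⟨hx, hf⟩
  · rintro ⟨hxΘ, y, hy, hlt⟩
    exact (hx y hy).2 hlt.le

lemma coe_subset_floorB (Θ : Finset S) : (Θ : Set S) ⊆ floorB Θ :=
  fun _ hx hf => hf.1 hx

lemma localize_set {Θ : Finset S} (hΘ : IsTimeBox Θ)
    {κ : (S → E) → BoxMeasure E Θ} (hκ : IsProperKernel E Θ κ)
    {R : Set S} (hR : R ⊆ ringB Θ)
    {A : Set (S → E)} (hA : MeasurableSet[F E ((Θ : Set S) ∪ R)] A) :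
    Measurable[F E (past (Θ : Set S) ∪ R)] fun ω => κ ω A := by
  have hfloor : (Θ : Set S) ∪ R ⊆ floorB Θ :=
    Set.union_subset (coe_subset_floorB Θ) (hR.trans (ringB_subset_floorB hΘ))
  have hle : (F E ((Θ : Set S) ∪ R) : MeasurableSpace (S → E)) ≤ F E (floorB Θ) :=
    F_mono hfloor
  have key : ∀ s, MeasurableSet[F E ((Θ : Set S))] s → ∀ t, MeasurableSet[F E R] t →
      ∀ ω, κ ω (s ∩ t) = t.indicator (fun _ => κ ω s) ω := by
    intro s hs t ht ω
    have htf : MeasurableSet[F E (floorB Θ)] t :=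
      measSet_mono (F_mono (hR.trans (ringB_subset_floorB hΘ))) ht
    have htp := hκ.proper t (measSet_mono (F_mono hR) ht) ω
    haveI := hκ.prob ω
    by_cases hω : ω ∈ t
    · have h1 : κ ω t = 1 := by rw [htp]; simp [hω]
      have hc : κ ω tᶜ = 0 := by
        rw [measure_compl htf (measure_ne_top _ _), h1, measure_univ, tsub_self]
      have h2 := measure_inter_add_diff (μ := κ ω) s htf
      rw [measure_mono_null (Set.diff_subset_compl s t) hc, add_zero] at h2
      simp [Set.indicator_of_mem hω, h2]
    · have h0 : κ ω t = 0 := by rw [htp]; simp [hω]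
      simp [Set.indicator_of_notMem hω,
        measure_mono_null Set.inter_subset_right h0]
  have hgen : (F E ((Θ : Set S) ∪ R) : MeasurableSpace (S → E)) =
      MeasurableSpace.generateFrom
        {B | ∃ s t, MeasurableSet[F E ((Θ : Set S))] s ∧ MeasurableSet[F E R] t ∧ B = s ∩ t} := by
    rw [F_union]; exact sup_eq_generateFrom_inter _ _
  have hpi : IsPiSystem
      {B | ∃ s t, MeasurableSet[F E ((Θ : Set S))] s ∧ MeasurableSet[F E R] t ∧ B = s ∩ t} := by
    rintro B ⟨s, t, hs, ht, rfl⟩ B' ⟨s', t', hs', ht', rfl⟩ _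
    refine ⟨s ∩ s', t ∩ t', hs.inter hs', ht.inter ht', ?_⟩
    ext x; simp only [Set.mem_inter_iff]; tauto
  refine MeasurableSpace.induction_on_inter (m := F E ((Θ : Set S) ∪ R))
    (C := fun B _ => Measurable[F E (past (Θ : Set S) ∪ R)] fun ω => κ ω B)
    hgen hpi ?_ ?_ ?_ ?_ A hA
  · simp only [measure_empty]; exact measurable_const
  · rintro B ⟨s, t, hs, ht, rfl⟩
    have heq : (fun ω => κ ω (s ∩ t)) = t.indicator (fun ω => κ ω s) :=
      funext fun ω => key s hs t ht ω
    rw [heq]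
    exact Measurable.indicator
      ((hκ.measPast s hs).mono (F_mono Set.subset_union_left) le_rfl)
      (measSet_mono (F_mono Set.subset_union_right) ht)
  · intro B hB hmB
    have heq : ∀ ω, κ ω Bᶜ = 1 - κ ω B := by
      intro ω; haveI := hκ.prob ω
      rw [measure_compl (measSet_mono hle hB) (measure_ne_top _ _), measure_univ]
    simp_rw [heq]
    exact measurable_const.sub hmB
  · intro g hdis hmg hCg
    have heq : ∀ ω, κ ω (⋃ i, g i) = ∑' i, κ ω (g i) := fun ω =>
      measure_iUnion hdis fun i => measSet_mono hle (hmg i)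
    simp_rw [heq]
    exact Measurable.ennreal_tsum hCg

lemma localize_lintegral {Θ : Finset S} (hΘ : IsTimeBox Θ)
    {κ : (S → E) → BoxMeasure E Θ} (hκ : IsProperKernel E Θ κ)
    {R : Set S} (hR : R ⊆ ringB Θ)
    {f : (S → E) → ℝ≥0∞} (hf : Measurable[F E ((Θ : Set S) ∪ R)] f) :
    Measurable[F E (past (Θ : Set S) ∪ R)] fun ω => ∫⁻ σ, f σ ∂(κ ω) := by
  have hfloor : (Θ : Set S) ∪ R ⊆ floorB Θ :=
    Set.union_subset (coe_subset_floorB Θ) (hR.trans (ringB_subset_floorB hΘ))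
  have hle : (F E ((Θ : Set S) ∪ R) : MeasurableSpace (S → E)) ≤ F E (floorB Θ) :=
    F_mono hfloor
  refine @Measurable.ennreal_induction (S → E) (F E ((Θ : Set S) ∪ R))
    (fun f => Measurable[F E (past (Θ : Set S) ∪ R)] fun ω => ∫⁻ σ, f σ ∂(κ ω)) ?_ ?_ ?_ f hf
  · intro c s hs
    have heq : ∀ ω, ∫⁻ σ, s.indicator (fun _ => c) σ ∂(κ ω) = c * κ ω s := fun ω =>
      lintegral_indicator_const (measSet_mono hle hs) c
    simp_rw [heq]
    exact (localize_set hΘ hκ hR hs).const_mul c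
  · intro f g _ hfm hgm hPf hPg
    have heq : ∀ ω, ∫⁻ σ, (f + g) σ ∂(κ ω) = (∫⁻ σ, f σ ∂(κ ω)) + ∫⁻ σ, g σ ∂(κ ω) := by
      intro ω
      simp only [Pi.add_apply]
      exact lintegral_add_left (hfm.mono hle le_rfl) _
    simp_rw [heq]
    exact hPf.add hPg
  · intro f hfm hmono hPf
    have heq : ∀ ω, ∫⁻ σ, (⨆ n, f n σ) ∂(κ ω) = ⨆ n, ∫⁻ σ, f n σ ∂(κ ω) := fun ω =>
      lintegral_iSup (fun n => (hfm n).mono hle le_rfl) hmono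
    simp_rw [heq]
    exact Measurable.iSup hPf

end CompositionAux

/-- Composition of proper oriented kernels on two suitably placed time boxes: the union is a
time box with the expected past and future, and the composed kernel is a proper oriented
kernel on the union. -/
theorem kernel_composition {S : Type*} [PartialOrder S] [DecidableEq S]
    {E : Type*} [MeasurableSpace E]
    (Λ Δ : Finset S) (hΛ : IsTimeBox Λ) (hΔ : IsTimeBox Δ)
    (h1 : (Δ : Set S) ∩ (Λ : Set S) = ∅)
    (h2 : (Δ : Set S) ∩ future (Λ : Set S) = ∅)
    (h3 : past (Λ : Set S) ∩ future (Δ : Set S) = ∅)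
    (γΛ : (S → E) → BoxMeasure E Λ) (γΔ : (S → E) → BoxMeasure E Δ)
    (hγΛ : IsProperKernel E Λ γΛ) (hγΔ : IsProperKernel E Δ γΔ) :
    (IsTimeBox (Λ ∪ Δ) ∧
      future ((Λ ∪ Δ : Finset S) : Set S)
        = future (Λ : Set S) ∪ (future (Δ : Set S) \ (Λ : Set S)) ∧
      past ((Λ ∪ Δ : Finset S) : Set S)
        = past (Δ : Set S) ∪ (past (Λ : Set S) \ (Δ : Set S))) ∧
    ∃ γΓ : (S → E) → BoxMeasure E (Λ ∪ Δ),
      IsProperKernel E (Λ ∪ Δ) γΓ ∧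
      ∀ A : Set (S → E), MeasurableSet[F E (floorB (Λ ∪ Δ))] A →
        ∀ ω : S → E, γΓ ω A = ∫⁻ σ, γΛ σ A ∂(γΔ ω) := by
  classical
  have hd1 : ∀ x, x ∈ (Δ : Set S) → x ∉ (Λ : Set S) := fun x hxΔ hxΛ =>
    Set.eq_empty_iff_forall_notMem.mp h1 x ⟨hxΔ, hxΛ⟩
  have hd2 : ∀ x, x ∈ (Δ : Set S) → x ∉ future (Λ : Set S) := fun x hxΔ hxf =>
    Set.eq_empty_iff_forall_notMem.mp h2 x ⟨hxΔ, hxf⟩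
  have hd3 : ∀ x, x ∈ past (Λ : Set S) → x ∉ future (Δ : Set S) := fun x hxp hxf =>
    Set.eq_empty_iff_forall_notMem.mp h3 x ⟨hxp, hxf⟩
  have hΛd : ∀ x, x ∈ past (Λ : Set S) → x ∉ future (Λ : Set S) := fun x hxp hxf =>
    Set.eq_empty_iff_forall_notMem.mp hΛ x ⟨hxp, hxf⟩
  have hΔd : ∀ x, x ∈ past (Δ : Set S) → x ∉ future (Δ : Set S) := fun x hxp hxf =>
    Set.eq_empty_iff_forall_notMem.mp hΔ x ⟨hxp, hxf⟩
  have hcoe : ((Λ ∪ Δ : Finset S) : Set S) = (Λ : Set S) ∪ (Δ : Set S) := Finset.coe_union Λ Δ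
  -- decomposition of the future
  have Gfut : future (((Λ ∪ Δ : Finset S) : Set S))
      = future (Λ : Set S) ∪ (future (Δ : Set S) \ (Λ : Set S)) := by
    rw [hcoe]
    ext x
    constructor
    · rintro ⟨hxΓ, y, hy, hlt⟩
      have hxΛ : x ∉ (Λ : Set S) := fun h => hxΓ (Or.inl h)
      have hxΔ : x ∉ (Δ : Set S) := fun h => hxΓ (Or.inr h)
      rcases hy with hy | hy
      · exact Or.inl ⟨hxΛ, y, hy, hlt⟩
      · exact Or.inr ⟨⟨hxΔ, y, hy, hlt⟩, hxΛ⟩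
    · rintro (⟨hxΛ, y, hy, hlt⟩ | ⟨⟨hxΔ, y, hy, hlt⟩, hxΛ⟩)
      · refine ⟨?_, y, Or.inl hy, hlt⟩
        rintro (h | h)
        · exact hxΛ h
        · exact hd2 x h ⟨hxΛ, y, hy, hlt⟩
      · refine ⟨?_, y, Or.inr hy, hlt⟩
        rintro (h | h)
        · exact hxΛ h
        · exact hxΔ h
  -- past of Δ is not in Λ nor in the future of Λ
  have hpΔΛ : ∀ x, x ∈ past (Δ : Set S) → x ∉ (Λ : Set S) ∧ x ∉ future (Λ : Set S) := by
    rintro x ⟨hxΔ, y, hy, hlt⟩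
    constructor
    · intro hxΛ
      exact hd2 y hy ⟨hd1 y hy, x, hxΛ, hlt⟩
    · rintro ⟨hxΛ, z, hz, hzx⟩
      exact hd2 y hy ⟨hd1 y hy, z, hz, hzx.trans hlt⟩
  -- decomposition of the past
  have Gpast : past (((Λ ∪ Δ : Finset S) : Set S))
      = past (Δ : Set S) ∪ (past (Λ : Set S) \ (Δ : Set S)) := by
    rw [hcoe]
    ext x
    constructor
    · rintro ⟨hxΓ, y, hy, hlt⟩
      have hxΛ : x ∉ (Λ : Set S) := fun h => hxΓ (Or.inl h)
      have hxΔ : x ∉ (Δ : Set S) := fun h => hxΓ (Or.inr h)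
      rcases hy with hy | hy
      · exact Or.inr ⟨⟨hxΛ, y, hy, hlt⟩, hxΔ⟩
      · exact Or.inl ⟨hxΔ, y, hy, hlt⟩
    · rintro (⟨hxΔ, y, hy, hlt⟩ | ⟨⟨hxΛ, y, hy, hlt⟩, hxΔ⟩)
      · refine ⟨?_, y, Or.inr hy, hlt⟩
        rintro (h | h)
        · exact (hpΔΛ x ⟨hxΔ, y, hy, hlt⟩).1 h
        · exact hxΔ h
      · refine ⟨?_, y, Or.inl hy, hlt⟩
        rintro (h | h)
        · exact hxΛ h
        · exact hxΔ h
  -- the union is a time box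
  have Gbox : IsTimeBox (Λ ∪ Δ) := by
    rw [IsTimeBox, Gfut, Gpast]
    ext x
    simp only [Set.mem_inter_iff, Set.mem_empty_iff_false, iff_false, not_and]
    rintro (hp | ⟨hp, hxΔ⟩) (hf | ⟨hf, hxΛ⟩)
    · rcases hp with ⟨hxΔ', y, hy, hlt⟩
      rcases hf with ⟨hxΛ', z, hz, hzx⟩
      exact hd2 y hy ⟨hd1 y hy, z, hz, hzx.trans hlt⟩
    · exact hΔd x hp hf
    · exact hΛd x hp hf
    · exact hd3 x hp hf
  refine ⟨⟨Gbox, Gfut, Gpast⟩, ?_⟩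
  -- geometry for the kernel composition
  have hfΓΛ : floorB (Λ ∪ Δ) ⊆ floorB Λ := by
    intro x hx hxf
    exact hx (Gfut ▸ Or.inl hxf)
  have hfΓΔnΛ : ∀ x, x ∈ floorB (Λ ∪ Δ) → x ∉ (Λ : Set S) → x ∉ future (Δ : Set S) := by
    intro x hx hxΛ hxf
    exact hx (Gfut ▸ Or.inr ⟨hxf, hxΛ⟩)
  set R₁ : Set S := floorB (Λ ∪ Δ) \ (Λ : Set S) with hR₁def
  have hR₁ : R₁ ⊆ ringB Λ := by
    rintro x ⟨hx, hxΛ⟩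
    exact mem_past_or_outer hxΛ (hfΓΛ hx)
  have hcov₁ : floorB (Λ ∪ Δ) ⊆ (Λ : Set S) ∪ R₁ := by
    intro x hx
    by_cases h : x ∈ (Λ : Set S)
    · exact Or.inl h
    · exact Or.inr ⟨hx, h⟩
  have hW₂ : past (Λ : Set S) ∪ R₁ ⊆ floorB Δ := by
    rintro x (hx | ⟨hx, hxΛ⟩)
    · exact hd3 x hx
    · exact hfΓΔnΛ x hx hxΛ
  set R₂ : Set S := (past (Λ : Set S) ∪ R₁) \ (Δ : Set S) with hR₂def
  have hR₂ : R₂ ⊆ ringB Δ := by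
    rintro x ⟨hx, hxΔ⟩
    exact mem_past_or_outer hxΔ (hW₂ hx)
  have hcov₂ : past (Λ : Set S) ∪ R₁ ⊆ (Δ : Set S) ∪ R₂ := by
    intro x hx
    by_cases h : x ∈ (Δ : Set S)
    · exact Or.inl h
    · exact Or.inr ⟨hx, h⟩
  have hpastΔΓ : past (Δ : Set S) ⊆ past (((Λ ∪ Δ : Finset S) : Set S)) := by
    intro x hx; exact Gpast ▸ Or.inl hx
  have hpastΛΓ : past (Λ : Set S) \ (Δ : Set S) ⊆ past (((Λ ∪ Δ : Finset S) : Set S)) := by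
    intro x hx; exact Gpast ▸ Or.inr hx
  have hout : past (Δ : Set S) ∪ R₂ ⊆ ringB (Λ ∪ Δ) := by
    rintro x (hx | ⟨(hx | ⟨hx, hxΛ⟩), hxΔ⟩)
    · exact Or.inl (hpastΔΓ hx)
    · exact Or.inl (hpastΛΓ ⟨hx, hxΔ⟩)
    · refine mem_past_or_outer ?_ ?_
      · rw [hcoe]; rintro (h | h)
        · exact hxΛ h
        · exact hxΔ h
      · exact hx
  -- measurability of the integrand
  have hmeasΛ : ∀ A : Set (S → E), MeasurableSet[F E (floorB (Λ ∪ Δ))] A →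
      Measurable[F E (past (Λ : Set S) ∪ R₁)] fun σ => γΛ σ A := by
    intro A hA
    exact localize_set hΛ hγΛ hR₁ (measSet_mono (F_mono hcov₁) hA)
  have hmeasΛ' : ∀ A : Set (S → E), MeasurableSet[F E (floorB (Λ ∪ Δ))] A →
      Measurable[F E (floorB Δ)] fun σ => γΛ σ A := by
    intro A hA
    exact (hmeasΛ A hA).mono (F_mono hW₂) le_rfl
  -- the composed kernel
  let γΓ : (S → E) → BoxMeasure E (Λ ∪ Δ) := fun ω =>
    @Measure.ofMeasurable _ (F E (floorB (Λ ∪ Δ)))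
      (fun A _ => ∫⁻ σ, γΛ σ A ∂(γΔ ω))
      (by simp)
      (by
        intro g hg hdis
        have hu : ∀ σ, γΛ σ (⋃ i, g i) = ∑' i, γΛ σ (g i) := fun σ =>
          measure_iUnion hdis fun i => measSet_mono (F_mono hfΓΛ) (hg i)
        simp_rw [hu]
        exact lintegral_tsum fun i => (hmeasΛ' _ (hg i)).aemeasurable)
  have happ : ∀ (A : Set (S → E)), MeasurableSet[F E (floorB (Λ ∪ Δ))] A →
      ∀ ω, γΓ ω A = ∫⁻ σ, γΛ σ A ∂(γΔ ω) := fun A hA ω =>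
    @Measure.ofMeasurable_apply _ (F E (floorB (Λ ∪ Δ))) _ _ _ A hA
  refine ⟨γΓ, ⟨?_, ?_, ?_, ?_⟩, fun A hA ω => happ A hA ω⟩
  · -- probability
    intro ω
    constructor
    rw [happ Set.univ MeasurableSet.univ ω]
    have hu : ∀ σ, γΛ σ Set.univ = 1 := fun σ => (hγΛ.prob σ).measure_univ
    simp_rw [hu, lintegral_one]
    exact (hγΔ.prob ω).measure_univ
  · -- measurable w.r.t. the ring
    intro A hA
    have heq : (fun ω => γΓ ω A) = fun ω => ∫⁻ σ, γΛ σ A ∂(γΔ ω) :=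
      funext fun ω => happ A hA ω
    rw [heq]
    have hf : Measurable[F E ((Δ : Set S) ∪ R₂)] fun σ => γΛ σ A :=
      (hmeasΛ A hA).mono (F_mono hcov₂) le_rfl
    exact (localize_lintegral hΔ hγΔ hR₂ hf).mono (F_mono hout) le_rfl
  · -- measurable w.r.t. the past
    intro A hA
    have hA' : MeasurableSet[F E ((Λ : Set S) ∪ (Δ : Set S))] A := by
      rw [← hcoe]; exact hA
    have hΔring : (Δ : Set S) ⊆ ringB Λ := fun x hx =>
      mem_past_or_outer (hd1 x hx) (hd2 x hx)
    have hs1 : Measurable[F E (past (Λ : Set S) ∪ (Δ : Set S))] fun σ => γΛ σ A :=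
      localize_set hΛ hγΛ hΔring hA'
    set R₂' : Set S := past (Λ : Set S) \ (Δ : Set S) with hR₂'def
    have hR₂' : R₂' ⊆ ringB Δ := by
      rintro x ⟨hx, hxΔ⟩
      exact mem_past_or_outer hxΔ (hd3 x hx)
    have hcov' : past (Λ : Set S) ∪ (Δ : Set S) ⊆ (Δ : Set S) ∪ R₂' := by
      intro x hx
      by_cases h : x ∈ (Δ : Set S)
      · exact Or.inl h
      · rcases hx with hx | hx
        · exact Or.inr ⟨hx, h⟩
        · exact absurd hx h
    have hf : Measurable[F E ((Δ : Set S) ∪ R₂')] fun σ => γΛ σ A :=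
      hs1.mono (F_mono hcov') le_rfl
    have hfloorA : MeasurableSet[F E (floorB (Λ ∪ Δ))] A :=
      measSet_mono (F_mono (coe_subset_floorB (Λ ∪ Δ))) hA
    have heq : (fun ω => γΓ ω A) = fun ω => ∫⁻ σ, γΛ σ A ∂(γΔ ω) :=
      funext fun ω => happ A hfloorA ω
    rw [heq]
    have hsub : past (Δ : Set S) ∪ R₂' ⊆ past (((Λ ∪ Δ : Finset S) : Set S)) := by
      rintro x (hx | hx)
      · exact hpastΔΓ hx
      · exact hpastΛΓ hx
    exact (localize_lintegral hΔ hγΔ hR₂' hf).mono (F_mono hsub) le_rfl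
  · -- properness
    intro B hB ω
    have hrΛ : ringB (Λ ∪ Δ) ⊆ ringB Λ := by
      rintro x (hx | hx)
      · rw [Gpast] at hx
        rcases hx with hx | ⟨hx, _⟩
        · exact mem_past_or_outer (hpΔΛ x hx).1 (hpΔΛ x hx).2
        · exact Or.inl hx
      · refine Or.inr fun y hy => hx y ?_
        rw [hcoe]; exact Or.inl hy
    have hrΔ : ringB (Λ ∪ Δ) ⊆ ringB Δ := by
      rintro x (hx | hx)
      · rw [Gpast] at hx
        rcases hx with hx | ⟨hx, hxΔ⟩
        · exact Or.inl hx
        · exact mem_past_or_outer hxΔ (hd3 x hx)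
      · refine Or.inr fun y hy => hx y ?_
        rw [hcoe]; exact Or.inr hy
    have hBfloorΓ : MeasurableSet[F E (floorB (Λ ∪ Δ))] B :=
      measSet_mono (F_mono (ringB_subset_floorB Gbox)) hB
    have hBfloorΔ : MeasurableSet[F E (floorB Δ)] B :=
      measSet_mono (F_mono ((hrΔ).trans (ringB_subset_floorB hΔ))) hB
    rw [happ B hBfloorΓ ω]
    have hΛB : ∀ σ, γΛ σ B = B.indicator (fun _ => (1 : ℝ≥0∞)) σ := fun σ =>
      hγΛ.proper B (measSet_mono (F_mono hrΛ) hB) σ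
    simp_rw [hΛB]
    rw [lintegral_indicator_const hBfloorΔ (1 : ℝ≥0∞), one_mul]
    exact hγΔ.proper B (measSet_mono (F_mono hrΔ) hB) ω
end POCpaper
end
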